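/- arXiv:1712.04613 — 4 statements merged into one kernel-verified Lean document; each statement's English description precedes it below -/
import Mathlib

section
/- Let N ∈ ℕ, W ∈ (0, 1/2), and K ∈ {1,…,N}. Let S_K denote the N×K matrix whose columns are the first K DPSS vectors. Then ∫_{−W}^{W} ‖e_f − S_K S_K* e_f‖₂² df = Σ_{ℓ=K}^{N−1} λ^{(ℓ)}, where λ^{(ℓ)} are the eigenvalues of B_{N,W} in decreasing order. -/
open Matrix MeasureTheory
open scoped Real

noncomputable section

/-- The prolate matrix `B_{N,W}`. -/
def prolateR (N : ℕ) (W : ℝ) : Matrix (Fin N) (Fin N) ℝ :=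
  Matrix.of fun m n : Fin N =>
    if m = n then 2 * W
    else Real.sin (2 * Real.pi * W * (((m : ℕ) : ℝ) - ((n : ℕ) : ℝ))) /
      (Real.pi * (((m : ℕ) : ℝ) - ((n : ℕ) : ℝ)))

/-- sampled complex exponential `e_f`. -/
def eVec (N : ℕ) (f : ℝ) : Fin N → ℂ :=
  fun n => Complex.exp (2 * (Real.pi : ℂ) * (f : ℂ) * ((n : ℕ) : ℂ) * Complex.I)

/-- squared residual `‖e_f − P e_f‖₂²`. -/
def residP {N : ℕ} (P : Matrix (Fin N) (Fin N) ℂ) (f : ℝ) : ℝ :=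
  ∑ n, ‖(eVec N f - P.mulVec (eVec N f)) n‖ ^ 2

/-!
For the orthogonal projection `P = S_K S_Kᴴ`, the squared residual `‖e_f − P e_f‖²` is the
quadratic form `e_fᴴ (1 − P) e_f`, and `∫_{−W}^{W} conj (e_f[m]) e_f[n] df = B_{N,W}[n, m]`.
Integrating therefore gives `tr ((1 − P) B) = tr B − tr (S_Kᵀ B S_K)`, and since `B S = S Λ`
with `S` orthogonal this is `∑_ℓ λ^{(ℓ)} − ∑_{ℓ < K} λ^{(ℓ)}`.
-/

open ComplexConjugate

theorem integral_exp_two_pi_mul_I (W a : ℝ) (ha : a ≠ 0) :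
    ∫ f in (-W)..W, Complex.exp (2 * π * a * f * Complex.I)
      = ((Real.sin (2 * π * W * a) / (π * a) : ℝ) : ℂ) := by
  have hc : 2 * (π : ℂ) * a * Complex.I ≠ 0 := by simp [ha, Real.pi_ne_zero]
  simp_rw [show ∀ f : ℝ, 2 * (π : ℂ) * a * f * Complex.I = 2 * π * a * Complex.I * f from
    fun f => by ring]
  rw [integral_exp_mul_complex hc]
  push_cast
  rw [Complex.sin]
  field_simp
  ring_nf
  simp only [Complex.I_sq]
  ring_nf

theorem conj_eVec_mul_eVec (N : ℕ) (f : ℝ) (m n : Fin N) :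
    conj (eVec N f m) * eVec N f n
      = Complex.exp (2 * π * ((n : ℕ) - (m : ℕ) : ℝ) * f * Complex.I) := by
  simp only [eVec, ← Complex.exp_conj, ← Complex.exp_add, map_mul, Complex.conj_ofReal,
    Complex.conj_I, map_ofNat, map_natCast]
  push_cast
  ring_nf

theorem integral_conj_eVec_mul_eVec (N : ℕ) (W : ℝ) (m n : Fin N) :
    ∫ f in (-W)..W, conj (eVec N f m) * eVec N f n = prolateR N W n m := by
  simp_rw [conj_eVec_mul_eVec]
  by_cases hnm : n = m
  · simp [hnm, prolateR]
    ring
  · have hsub : ((n : ℕ) - (m : ℕ) : ℝ) ≠ 0 :=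
      sub_ne_zero.mpr fun h => hnm (Fin.ext (by exact_mod_cast h))
    rw [integral_exp_two_pi_mul_I W _ hsub, prolateR, of_apply, if_neg hnm]

theorem sum_norm_sq_eq_re_star_dotProduct {n : Type*} [Fintype n] (v : n → ℂ) :
    ∑ i, ‖v i‖ ^ 2 = (star v ⬝ᵥ v).re := by
  simp only [dotProduct, Pi.star_apply, Complex.star_def, Complex.conj_mul', Complex.re_sum]
  norm_cast

theorem residP_eq_re_star_dotProduct_mulVec {N : ℕ} (P : Matrix (Fin N) (Fin N) ℂ) (f : ℝ) :
    residP P f = (star (eVec N f) ⬝ᵥ ((1 - P)ᴴ * (1 - P)) *ᵥ eVec N f).re := by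
  have hres : eVec N f - P *ᵥ eVec N f = (1 - P) *ᵥ eVec N f := by
    rw [sub_mulVec, one_mulVec]
  rw [residP, hres, sum_norm_sq_eq_re_star_dotProduct, star_mulVec, ← dotProduct_mulVec,
    mulVec_mulVec]

theorem integral_star_eVec_dotProduct_mulVec (N : ℕ) (W : ℝ) (A : Matrix (Fin N) (Fin N) ℂ) :
    ∫ f in (-W)..W, star (eVec N f) ⬝ᵥ A *ᵥ eVec N f
      = (A * (prolateR N W).map (fun x => (x : ℂ))).trace := by
  have hexpand : ∀ f, star (eVec N f) ⬝ᵥ A *ᵥ eVec N f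
      = ∑ i, ∑ j, A i j * (conj (eVec N f i) * eVec N f j) := fun f => by
    simp only [dotProduct, mulVec, Pi.star_apply, Complex.star_def, Finset.mul_sum]
    exact Finset.sum_congr rfl fun i _ => Finset.sum_congr rfl fun j _ => by ring
  have hcont : ∀ i j, Continuous fun f => A i j * (conj (eVec N f i) * eVec N f j) :=
    fun i j => by unfold eVec; fun_prop
  simp_rw [hexpand]
  rw [intervalIntegral.integral_finsetSum fun i _ =>
    (continuous_finsetSum _ fun j _ => hcont i j).intervalIntegrable _ _]
  refine Finset.sum_congr rfl fun i _ => ?_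
  rw [intervalIntegral.integral_finsetSum fun j _ => (hcont i j).intervalIntegrable _ _]
  simp only [intervalIntegral.integral_const_mul, integral_conj_eVec_mul_eVec]
  rfl

theorem integral_residP (N : ℕ) (W : ℝ) (P : Matrix (Fin N) (Fin N) ℂ) :
    ∫ f in (-W)..W, residP P f
      = ((1 - P)ᴴ * (1 - P) * (prolateR N W).map (fun x => (x : ℂ))).trace.re := by
  simp_rw [residP_eq_re_star_dotProduct_mulVec]
  rw [← integral_star_eVec_dotProduct_mulVec]
  have hcont : Continuous fun f => star (eVec N f) ⬝ᵥ ((1 - P)ᴴ * (1 - P)) *ᵥ eVec N f := by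
    unfold eVec; fun_prop
  exact intervalIntegral.intervalIntegral_re (hcont.intervalIntegrable _ _)

section Projection

variable {R n ι : Type*} [CommRing R] [StarRing R] [Fintype n] [DecidableEq n] [Fintype ι]

theorem conjTranspose_one_sub_mul_one_sub_of_conjTranspose_mul_self [DecidableEq ι]
    {M : Matrix n ι R} (hM : Mᴴ * M = 1) : (1 - M * Mᴴ)ᴴ * (1 - M * Mᴴ) = 1 - M * Mᴴ := by
  have hidem : M * Mᴴ * (M * Mᴴ) = M * Mᴴ := by
    rw [Matrix.mul_assoc, ← Matrix.mul_assoc Mᴴ, hM, Matrix.one_mul]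
  rw [conjTranspose_sub, conjTranspose_one, conjTranspose_mul, conjTranspose_conjTranspose,
    Matrix.sub_mul, Matrix.one_mul, Matrix.mul_sub, Matrix.mul_one, hidem, sub_self, sub_zero]

theorem trace_one_sub_mul_conjTranspose_mul (M : Matrix n ι R) (B : Matrix n n R) :
    ((1 - M * Mᴴ) * B).trace = B.trace - (Mᴴ * B * M).trace := by
  rw [Matrix.sub_mul, Matrix.one_mul, trace_sub, Matrix.mul_assoc, trace_mul_comm,
    Matrix.mul_assoc]

end Projection

section Orthogonal

variable {R n ι : Type*} [CommRing R] [Fintype n]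

theorem transpose_submatrix_mul_mul_submatrix (S A : Matrix n n R) (c : ι → n) :
    (S.submatrix id c)ᵀ * A * S.submatrix id c = (Sᵀ * A * S).submatrix c c := by
  rw [submatrix_mul _ _ c id c Function.bijective_id,
    submatrix_mul _ _ c id id Function.bijective_id, submatrix_id_id, transpose_submatrix]

variable [DecidableEq n] {S B : Matrix n n R} {d : n → R}

theorem transpose_submatrix_mul_submatrix_of_transpose_mul_self [DecidableEq ι]
    (hS : Sᵀ * S = 1) {c : ι → n} (hc : Function.Injective c) :
    (S.submatrix id c)ᵀ * S.submatrix id c = 1 := by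
  simpa [hS, submatrix_one c hc] using transpose_submatrix_mul_mul_submatrix S 1 c

theorem transpose_submatrix_mul_mul_submatrix_of_mul_eq_mul_diagonal [DecidableEq ι]
    (hS : Sᵀ * S = 1) (hB : B * S = S * diagonal d) {c : ι → n} (hc : Function.Injective c) :
    (S.submatrix id c)ᵀ * B * S.submatrix id c = diagonal (d ∘ c) := by
  rw [transpose_submatrix_mul_mul_submatrix, Matrix.mul_assoc, hB, ← Matrix.mul_assoc, hS,
    Matrix.one_mul, submatrix_diagonal d c hc]

theorem trace_eq_sum_of_mul_eq_mul_diagonal (hS : Sᵀ * S = 1) (hB : B * S = S * diagonal d) :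
    B.trace = ∑ i, d i := by
  have hSS : S * Sᵀ = 1 := mul_eq_one_comm.mp hS
  calc B.trace = (B * S * Sᵀ).trace := by rw [Matrix.mul_assoc, hSS, Matrix.mul_one]
    _ = ∑ i, d i := by rw [hB, trace_mul_cycle, hS, Matrix.one_mul, trace_diagonal]

end Orthogonal

section OfReal

variable {m n p : Type*}

theorem conjTranspose_map_ofReal (A : Matrix m n ℝ) :
    (A.map fun x => (x : ℂ))ᴴ = Aᵀ.map fun x => (x : ℂ) := by
  rw [← conjTranspose_map _ fun x => (Complex.conj_ofReal x).symm,
    conjTranspose_eq_transpose_of_trivial]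

theorem map_ofReal_mul_map_ofReal [Fintype n] (A : Matrix m n ℝ) (B : Matrix n p ℝ) :
    A.map (fun x => (x : ℂ)) * B.map (fun x => (x : ℂ)) = (A * B).map fun x => (x : ℂ) :=
  (Matrix.map_mul (f := Complex.ofRealHom)).symm

theorem trace_map_ofReal [Fintype n] (A : Matrix n n ℝ) :
    (A.map fun x => (x : ℂ)).trace = A.trace := by
  simp [trace]

end OfReal

theorem integral_residP_of_transpose_mul_self (N : ℕ) (W : ℝ) {ι : Type*} [Fintype ι]
    [DecidableEq ι] (Q : Matrix (Fin N) ι ℝ) (hQ : Qᵀ * Q = 1) :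
    ∫ f in (-W)..W, residP ((Q.map fun x => (x : ℂ)) * (Q.map fun x => (x : ℂ))ᴴ) f
      = (prolateR N W).trace - (Qᵀ * prolateR N W * Q).trace := by
  have hQc : (Q.map fun x => (x : ℂ))ᴴ * Q.map (fun x => (x : ℂ)) = 1 := by
    rw [conjTranspose_map_ofReal, map_ofReal_mul_map_ofReal, hQ]
    exact Matrix.map_one _ rfl rfl
  rw [integral_residP, conjTranspose_one_sub_mul_one_sub_of_conjTranspose_mul_self hQc,
    trace_one_sub_mul_conjTranspose_mul, conjTranspose_map_ofReal, map_ofReal_mul_map_ofReal,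
    map_ofReal_mul_map_ofReal, trace_map_ofReal, trace_map_ofReal, ← Complex.ofReal_sub,
    Complex.ofReal_re]

theorem Fin.sum_sub_sum_castLE {M : Type*} [AddCommGroup M] {K N : ℕ} (h : K ≤ N)
    (g : Fin N → M) :
    ∑ ℓ, g ℓ - ∑ i : Fin K, g (Fin.castLE h i)
      = ∑ ℓ ∈ Finset.univ.filter (fun ℓ : Fin N => K ≤ (ℓ : ℕ)), g ℓ := by
  have himage : (Finset.univ : Finset (Fin K)).map (Fin.castLEEmb h)
      = Finset.univ.filter (fun ℓ : Fin N => ¬ K ≤ (ℓ : ℕ)) := by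
    ext ℓ
    simp only [Finset.mem_map, Finset.mem_univ, true_and, Finset.mem_filter, not_le]
    exact ⟨fun ⟨i, hi⟩ => hi ▸ i.isLt, fun hℓ => ⟨⟨ℓ, hℓ⟩, rfl⟩⟩
  rw [← Finset.sum_filter_add_sum_filter_not Finset.univ (fun ℓ : Fin N => K ≤ (ℓ : ℕ)),
    ← himage, Finset.sum_map]
  simp

theorem stmt4_general (N K : ℕ) (W : ℝ) (hKN : K ≤ N)
    (lam : Fin N → ℝ) (S : Matrix (Fin N) (Fin N) ℝ)
    (hOrth : Sᵀ * S = 1)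
    (hEig : prolateR N W * S = S * Matrix.diagonal lam) :
    (∫ f in (-W)..W,
        residP ((S.map (fun x => (x : ℂ))).submatrix id (Fin.castLE hKN) *
          ((S.map (fun x => (x : ℂ))).submatrix id (Fin.castLE hKN))ᴴ) f)
      = ∑ ℓ ∈ Finset.univ.filter (fun ℓ : Fin N => K ≤ (ℓ : ℕ)), lam ℓ := by
  have hc : Function.Injective (Fin.castLE hKN) := Fin.castLE_injective hKN
  rw [submatrix_map,
    integral_residP_of_transpose_mul_self N W _
      (transpose_submatrix_mul_submatrix_of_transpose_mul_self hOrth hc),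
    transpose_submatrix_mul_mul_submatrix_of_mul_eq_mul_diagonal hOrth hEig hc,
    trace_eq_sum_of_mul_eq_mul_diagonal hOrth hEig, trace_diagonal]
  exact Fin.sum_sub_sum_castLE hKN lam

/-- `∫_{−W}^{W} ‖e_f − S_K S_K* e_f‖₂² df = Σ_{ℓ=K}^{N−1} λ^{(ℓ)}`. -/
theorem stmt4 (N K : ℕ) (W : ℝ) (hW : W ∈ Set.Ioo (0 : ℝ) (1 / 2))
    (hK1 : 1 ≤ K) (hKN : K ≤ N)
    (lam : Fin N → ℝ) (S : Matrix (Fin N) (Fin N) ℝ)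
    (hOrth : Sᵀ * S = 1)
    (hEig : prolateR N W * S = S * Matrix.diagonal lam)
    (hAnti : StrictAnti lam)
    (hPos : ∀ ℓ, 0 < lam ℓ) (hLtOne : ∀ ℓ, lam ℓ < 1) :
    (∫ f in (-W)..W,
        residP ((S.map (fun x => (x : ℂ))).submatrix id (Fin.castLE hKN) *
          ((S.map (fun x => (x : ℂ))).submatrix id (Fin.castLE hKN))ᴴ) f)
      = ∑ ℓ ∈ Finset.univ.filter (fun ℓ : Fin N => K ≤ (ℓ : ℕ)), lam ℓ :=
  stmt4_general N K W hKN lam S hOrth hEig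
end
end

section
/- Let N ∈ ℕ, W ∈ (0, 1/2), and K ∈ {1,…,N}. For every Q ∈ ℂ^{N×K} with orthonormal columns (Q*Q = I), ∫_{−W}^{W} ‖e_f − QQ*e_f‖₂² df ≥ Σ_{ℓ=K}^{N−1} λ^{(ℓ)}, i.e., the matrix S_K of the first K DPSS vectors minimizes the mean-squared representation error ∫_{−W}^{W} ‖e_f − QQ*e_f‖₂² df over all N×K matrices Q with orthonormal columns. -/
open Matrix MeasureTheory
open scoped Real

noncomputable section

/-! Integrating the Gram matrix of the exponentials, `∫_{-W}^{W} e_f e_fᴴ df = B_{N,W}`, turns the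
mean-squared error into `tr B − tr (Qᴴ B Q)`. Writing `B = S Λ Sᵀ` gives
`tr (Qᴴ B Q) = ∑ ℓ λ_ℓ c_ℓ` with `c_ℓ = ‖Qᴴ s_ℓ‖² ∈ [0, 1]` (Bessel) and `∑ ℓ c_ℓ = K`; for
decreasing `λ` such a weighted sum is largest when the weight sits on the `K` largest
eigenvalues (Ky Fan), so `tr (Qᴴ B Q) ≤ ∑_{ℓ<K} λ_ℓ`. -/

@[fun_prop]
theorem continuous_eVec (N : ℕ) (n : Fin N) : Continuous fun f => eVec N f n := by
  unfold eVec; fun_prop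

theorem intervalIntegral_cexp_mul_I_of_ne_zero (W d : ℝ) (hd : d ≠ 0) :
    ∫ f in (-W)..W, Complex.exp (2 * π * f * d * Complex.I) =
      ((Real.sin (2 * π * W * d) / (π * d) : ℝ) : ℂ) := by
  have hc : (2 * π * d * Complex.I : ℂ) ≠ 0 := by simp [Real.pi_ne_zero, hd]
  have hsin : Complex.exp (2 * π * d * Complex.I * W) -
      Complex.exp (2 * π * d * Complex.I * (-W : ℝ)) =
        2 * Complex.I * Complex.sin (2 * π * W * d) := by
    rw [Complex.sin]
    push_cast
    ring_nf
    rw [Complex.I_sq]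
    ring_nf
  simp_rw [show ∀ f : ℝ, (2 * π * f * d * Complex.I : ℂ) = 2 * π * d * Complex.I * f from
    fun f => by ring]
  rw [integral_exp_mul_complex hc, hsin]
  push_cast
  field_simp

theorem intervalIntegral_star_eVec_mul_eVec (N : ℕ) (W : ℝ) (m n : Fin N) :
    ∫ f in (-W)..W, star (eVec N f m) * eVec N f n = (prolateR N W n m : ℂ) := by
  have hexp : ∀ f : ℝ, star (eVec N f m) * eVec N f n
      = Complex.exp (2 * π * f * (((n : ℕ) : ℝ) - ((m : ℕ) : ℝ) : ℝ) * Complex.I) := by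
    intro f
    rw [eVec, eVec, Complex.star_def, ← Complex.exp_conj, ← Complex.exp_add]
    congr 1
    simp only [map_mul, Complex.conj_I, Complex.conj_ofReal, map_ofNat, Complex.conj_natCast]
    push_cast
    ring
  simp_rw [hexp]
  by_cases hnm : n = m
  · subst hnm
    simp [prolateR, two_mul]
  · have hd : ((n : ℕ) : ℝ) - ((m : ℕ) : ℝ) ≠ 0 := by
      rw [sub_ne_zero, Nat.cast_inj.ne]
      exact Fin.val_ne_of_ne hnm
    rw [intervalIntegral_cexp_mul_I_of_ne_zero W _ hd]
    simp [prolateR, hnm]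

theorem ofReal_sum_norm_sq_mulVec_eVec {K N : ℕ} (A : Matrix (Fin K) (Fin N) ℂ) (f : ℝ) :
    ((∑ k, ‖(A *ᵥ eVec N f) k‖ ^ 2 : ℝ) : ℂ) =
      ∑ k, ∑ m, ∑ n, star (A k m) * A k n * (star (eVec N f m) * eVec N f n) := by
  push_cast
  refine Finset.sum_congr rfl fun k _ => ?_
  rw [← Complex.conj_mul', ← Complex.star_def, mulVec, dotProduct, star_sum, Finset.sum_mul_sum]
  refine Finset.sum_congr rfl fun m _ => Finset.sum_congr rfl fun n _ => ?_
  rw [star_mul']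
  ring

theorem intervalIntegral_sum_norm_sq_mulVec_eVec {K N : ℕ} (A : Matrix (Fin K) (Fin N) ℂ)
    (W : ℝ) :
    ∫ f in (-W)..W, ∑ k, ‖(A *ᵥ eVec N f) k‖ ^ 2 =
      (A * (prolateR N W).map ((↑) : ℝ → ℂ) * Aᴴ).trace.re := by
  suffices h : ((∫ f in (-W)..W, ∑ k, ‖(A *ᵥ eVec N f) k‖ ^ 2 : ℝ) : ℂ) =
      (A * (prolateR N W).map ((↑) : ℝ → ℂ) * Aᴴ).trace by
    rw [← h, Complex.ofReal_re]
  have hint : ∀ g : ℝ → ℂ, Continuous g → IntervalIntegrable g volume (-W) W :=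
    fun g hg => hg.intervalIntegrable _ _
  rw [← intervalIntegral.integral_ofReal]
  simp_rw [ofReal_sum_norm_sq_mulVec_eVec]
  simp only [trace, diag, mul_apply, map_apply, conjTranspose_apply, Finset.sum_mul]
  rw [intervalIntegral.integral_finsetSum fun k _ => hint _ (by fun_prop)]
  refine Finset.sum_congr rfl fun k _ => ?_
  rw [intervalIntegral.integral_finsetSum fun m _ => hint _ (by fun_prop)]
  refine Finset.sum_congr rfl fun m _ => ?_
  rw [intervalIntegral.integral_finsetSum fun n _ => hint _ (by fun_prop)]
  refine Finset.sum_congr rfl fun n _ => ?_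
  rw [intervalIntegral.integral_const_mul, intervalIntegral_star_eVec_mul_eVec]
  ring

theorem star_dotProduct_self_eq_sum_norm_sq {n : Type*} [Fintype n] (v : n → ℂ) :
    star v ⬝ᵥ v = ((∑ i, ‖v i‖ ^ 2 : ℝ) : ℂ) := by
  push_cast
  exact Finset.sum_congr rfl fun i _ => Complex.conj_mul' (v i)

theorem conjTranspose_mul_self_apply_self {m n : Type*} [Fintype m] (M : Matrix m n ℂ) (i : n) :
    (Mᴴ * M) i i = ((∑ k, ‖M k i‖ ^ 2 : ℝ) : ℂ) :=
  star_dotProduct_self_eq_sum_norm_sq (fun k => M k i)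

theorem sum_norm_sq_sub_mulVec_mul_conjTranspose {m n : Type*} [Fintype m] [Fintype n]
    [DecidableEq n] (Q : Matrix m n ℂ) (hQ : Qᴴ * Q = 1) (x : m → ℂ) :
    ∑ i, ‖(x - (Q * Qᴴ) *ᵥ x) i‖ ^ 2 = ∑ i, ‖x i‖ ^ 2 - ∑ k, ‖(Qᴴ *ᵥ x) k‖ ^ 2 := by
  set u := Qᴴ *ᵥ x with hu
  have hQu : star (Q *ᵥ u) ⬝ᵥ Q *ᵥ u = star u ⬝ᵥ u := by
    rw [star_mulVec, dotProduct_mulVec, vecMul_vecMul, hQ, vecMul_one]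
  have hxu : star x ⬝ᵥ Q *ᵥ u = star u ⬝ᵥ u := by
    rw [dotProduct_mulVec, hu, star_mulVec, conjTranspose_conjTranspose]
  have hux : star (Q *ᵥ u) ⬝ᵥ x = star u ⬝ᵥ u := by
    rw [star_mulVec, ← dotProduct_mulVec, hu]
  have h : star (x - Q *ᵥ u) ⬝ᵥ (x - Q *ᵥ u) = star x ⬝ᵥ x - star u ⬝ᵥ u := by
    rw [star_sub, sub_dotProduct, dotProduct_sub, dotProduct_sub, hQu, hxu, hux]
    ring
  rw [← mulVec_mulVec]
  simp only [star_dotProduct_self_eq_sum_norm_sq] at h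
  exact_mod_cast h

theorem sum_norm_sq_mulVec_conjTranspose_le {m n : Type*} [Fintype m] [Fintype n]
    [DecidableEq n] (Q : Matrix m n ℂ) (hQ : Qᴴ * Q = 1) (x : m → ℂ) :
    ∑ k, ‖(Qᴴ *ᵥ x) k‖ ^ 2 ≤ ∑ i, ‖x i‖ ^ 2 := by
  have h := sum_norm_sq_sub_mulVec_mul_conjTranspose Q hQ x
  have h0 : 0 ≤ ∑ i, ‖(x - (Q * Qᴴ) *ᵥ x) i‖ ^ 2 := by positivity
  linarith

theorem intervalIntegral_residP_mul_conjTranspose {N K : ℕ} (Q : Matrix (Fin N) (Fin K) ℂ)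
    (hQ : Qᴴ * Q = 1) (W : ℝ) :
    ∫ f in (-W)..W, residP (Q * Qᴴ) f =
      ((prolateR N W).map ((↑) : ℝ → ℂ)).trace.re -
        (Qᴴ * (prolateR N W).map ((↑) : ℝ → ℂ) * Q).trace.re := by
  have hall := intervalIntegral_sum_norm_sq_mulVec_eVec (1 : Matrix (Fin N) (Fin N) ℂ) W
  have hproj := intervalIntegral_sum_norm_sq_mulVec_eVec Qᴴ W
  simp only [one_mulVec, Matrix.one_mul, conjTranspose_one, Matrix.mul_one] at hall
  rw [conjTranspose_conjTranspose] at hproj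
  simp_rw [residP, sum_norm_sq_sub_mulVec_mul_conjTranspose Q hQ]
  rw [intervalIntegral.integral_sub ((by fun_prop : Continuous _).intervalIntegrable _ _)
    ((by fun_prop : Continuous _).intervalIntegrable _ _), hall, hproj]

theorem re_trace_mul_diagonal_mul_conjTranspose {m n : Type*} [Fintype m] [Fintype n]
    [DecidableEq n] (M : Matrix m n ℂ) (lam : n → ℝ) :
    (M * diagonal (fun i => (lam i : ℂ)) * Mᴴ).trace.re = ∑ i, lam i * ∑ k, ‖M k i‖ ^ 2 := by
  simp only [trace, diag, mul_apply, diagonal_apply, conjTranspose_apply, mul_ite, mul_zero,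
    Finset.sum_ite_eq', Finset.mem_univ, if_true, Finset.mul_sum]
  rw [Finset.sum_comm, Complex.re_sum]
  refine Finset.sum_congr rfl fun i _ => ?_
  rw [Complex.re_sum]
  refine Finset.sum_congr rfl fun k _ => ?_
  rw [mul_right_comm, Complex.star_def, Complex.mul_conj', ← Complex.ofReal_pow,
    ← Complex.ofReal_mul, Complex.ofReal_re, mul_comm]

theorem sum_mul_le_sum_of_threshold {ι : Type*} [Fintype ι] [DecidableEq ι] (s : Finset ι)
    (lam c : ι → ℝ) (μ : ℝ) (hs : ∀ i ∈ s, μ ≤ lam i) (hsc : ∀ i ∉ s, lam i ≤ μ)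
    (hc0 : ∀ i, 0 ≤ c i) (hc1 : ∀ i, c i ≤ 1) (hc : ∑ i, c i = s.card) :
    ∑ i, lam i * c i ≤ ∑ i ∈ s, lam i := by
  have hterm : ∀ i, 0 ≤ (lam i - μ) * ((if i ∈ s then 1 else 0) - c i) := by
    intro i
    by_cases hi : i ∈ s
    · simp only [hi, if_true]
      exact mul_nonneg (sub_nonneg.2 (hs i hi)) (sub_nonneg.2 (hc1 i))
    · simp only [hi, if_false, zero_sub]
      exact mul_nonneg_of_nonpos_of_nonpos (sub_nonpos.2 (hsc i hi)) (neg_nonpos.2 (hc0 i))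
  have hsum : ∑ i, (lam i - μ) * ((if i ∈ s then 1 else 0) - c i)
      = ∑ i ∈ s, lam i - ∑ i, lam i * c i := by
    simp only [sub_mul, mul_sub, mul_ite, mul_one, mul_zero, Finset.sum_sub_distrib,
      Finset.sum_ite_mem, Finset.univ_inter, ← Finset.mul_sum, hc, Finset.sum_const, nsmul_eq_mul]
    ring
  linarith [Finset.sum_nonneg fun i (_ : i ∈ Finset.univ) => hterm i]

theorem re_trace_conjTranspose_mul_mul_le_sum {N K : ℕ} (U : Matrix (Fin N) (Fin N) ℂ)
    (hU : Uᴴ * U = 1) (lam : Fin N → ℝ) (hlam : Antitone lam) (hK1 : 1 ≤ K) (hKN : K ≤ N)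
    (Q : Matrix (Fin N) (Fin K) ℂ) (hQ : Qᴴ * Q = 1) :
    (Qᴴ * (U * diagonal (fun i => (lam i : ℂ)) * Uᴴ) * Q).trace.re ≤
      ∑ ℓ ∈ Finset.univ.filter (fun ℓ : Fin N => (ℓ : ℕ) < K), lam ℓ := by
  set M := Qᴴ * U with hM
  have hMM : M * Mᴴ = 1 := by
    rw [hM, conjTranspose_mul, conjTranspose_conjTranspose, Matrix.mul_assoc,
      ← Matrix.mul_assoc U, mul_eq_one_comm.mp hU, Matrix.one_mul, hQ]
  have hcol : ∀ ℓ, ∑ k, ‖M k ℓ‖ ^ 2 = ∑ k, ‖(Qᴴ *ᵥ fun n => U n ℓ) k‖ ^ 2 := fun ℓ => rfl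
  have hUcol : ∀ ℓ, ∑ n, ‖U n ℓ‖ ^ 2 = 1 := fun ℓ => by
    have h := conjTranspose_mul_self_apply_self U ℓ
    rw [hU, one_apply_eq] at h
    exact_mod_cast h.symm
  rw [show Qᴴ * (U * diagonal (fun i => (lam i : ℂ)) * Uᴴ) * Q
      = M * diagonal (fun i => (lam i : ℂ)) * Mᴴ by
    simp only [hM, conjTranspose_mul, conjTranspose_conjTranspose, Matrix.mul_assoc],
    re_trace_mul_diagonal_mul_conjTranspose]
  refine sum_mul_le_sum_of_threshold _ lam _ (lam ⟨K - 1, by omega⟩)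
    (fun ℓ hℓ => hlam ?_) (fun ℓ hℓ => hlam ?_) (fun ℓ => by positivity) (fun ℓ => ?_) ?_
  · simp only [Finset.mem_filter, Finset.mem_univ, true_and] at hℓ
    exact Fin.le_def.2 (by simp only; omega)
  · simp only [Finset.mem_filter, Finset.mem_univ, true_and] at hℓ
    exact Fin.le_def.2 (by simp only; omega)
  · exact (hcol ℓ).trans_le
      ((sum_norm_sq_mulVec_conjTranspose_le Q hQ fun n => U n ℓ).trans_eq (hUcol ℓ))
  · rw [Fin.card_filter_val_lt, min_eq_right hKN, Finset.sum_comm]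
    have hrow : ∀ k, ∑ ℓ, ‖M k ℓ‖ ^ 2 = 1 := fun k => by
      have h := conjTranspose_mul_self_apply_self Mᴴ k
      rw [conjTranspose_conjTranspose, hMM, one_apply_eq] at h
      simp only [conjTranspose_apply, norm_star] at h
      exact_mod_cast h.symm
    simp [hrow]

theorem map_ofReal_eq_mul_diagonal_mul_conjTranspose {n : Type*} [Fintype n] [DecidableEq n]
    (B S : Matrix n n ℝ) (lam : n → ℝ) (hS : Sᵀ * S = 1) (hBS : B * S = S * diagonal lam) :
    B.map ((↑) : ℝ → ℂ) =
      S.map ((↑) : ℝ → ℂ) * diagonal (fun i => (lam i : ℂ)) * (S.map ((↑) : ℝ → ℂ))ᴴ := by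
  have hB : B = S * diagonal lam * Sᵀ := by
    rw [← hBS, Matrix.mul_assoc, mul_eq_one_comm.mp hS, Matrix.mul_one]
  rw [← conjTranspose_map _ fun x => (Complex.conj_ofReal x).symm,
    conjTranspose_eq_transpose_of_trivial, ← diagonal_map Complex.ofReal_zero, hB,
    show ((↑) : ℝ → ℂ) = ⇑Complex.ofRealHom from rfl, Matrix.map_mul, Matrix.map_mul]

theorem map_ofReal_conjTranspose_mul_self {n : Type*} [Fintype n] [DecidableEq n]
    (S : Matrix n n ℝ) (hS : Sᵀ * S = 1) :
    (S.map ((↑) : ℝ → ℂ))ᴴ * S.map ((↑) : ℝ → ℂ) = 1 := by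
  rw [← conjTranspose_map _ fun x => (Complex.conj_ofReal x).symm,
    conjTranspose_eq_transpose_of_trivial, show ((↑) : ℝ → ℂ) = ⇑Complex.ofRealHom from rfl,
    ← Matrix.map_mul, hS, Matrix.map_one _ (map_zero _) (map_one _)]

theorem stmt5_general (N K : ℕ) (W : ℝ)
    (hK1 : 1 ≤ K) (hKN : K ≤ N)
    (lam : Fin N → ℝ) (S : Matrix (Fin N) (Fin N) ℝ)
    (hOrth : Sᵀ * S = 1)
    (hEig : prolateR N W * S = S * Matrix.diagonal lam)
    (hAnti : StrictAnti lam)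
    (Q : Matrix (Fin N) (Fin K) ℂ) (hQ : Qᴴ * Q = 1) :
    (∑ ℓ ∈ Finset.univ.filter (fun ℓ : Fin N => K ≤ (ℓ : ℕ)), lam ℓ)
      ≤ ∫ f in (-W)..W, residP (Q * Qᴴ) f := by
  set U := S.map ((↑) : ℝ → ℂ)
  have hU : Uᴴ * U = 1 := map_ofReal_conjTranspose_mul_self S hOrth
  have hB := map_ofReal_eq_mul_diagonal_mul_conjTranspose (prolateR N W) S lam hOrth hEig
  have htrace : ((prolateR N W).map ((↑) : ℝ → ℂ)).trace.re = ∑ ℓ, lam ℓ := by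
    rw [hB, trace_mul_cycle, hU, Matrix.one_mul, trace_diagonal, Complex.re_sum]
    simp only [Complex.ofReal_re]
  have hKyFan := re_trace_conjTranspose_mul_mul_le_sum U hU lam hAnti.antitone hK1 hKN Q hQ
  have hsplit := Finset.sum_filter_add_sum_filter_not Finset.univ
    (fun ℓ : Fin N => (ℓ : ℕ) < K) lam
  simp only [not_lt] at hsplit
  rw [intervalIntegral_residP_mul_conjTranspose Q hQ, htrace, hB]
  linarith

/-- every `Q` with orthonormal columns has MSE at least `Σ_{ℓ=K}^{N−1} λ^{(ℓ)}`,
i.e., `S_K` is MSE-optimal. -/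
theorem stmt5 (N K : ℕ) (W : ℝ) (hW : W ∈ Set.Ioo (0 : ℝ) (1 / 2))
    (hK1 : 1 ≤ K) (hKN : K ≤ N)
    (lam : Fin N → ℝ) (S : Matrix (Fin N) (Fin N) ℝ)
    (hOrth : Sᵀ * S = 1)
    (hEig : prolateR N W * S = S * Matrix.diagonal lam)
    (hAnti : StrictAnti lam)
    (hPos : ∀ ℓ, 0 < lam ℓ) (hLtOne : ∀ ℓ, lam ℓ < 1)
    (Q : Matrix (Fin N) (Fin K) ℂ) (hQ : Qᴴ * Q = 1) :
    (∑ ℓ ∈ Finset.univ.filter (fun ℓ : Fin N => K ≤ (ℓ : ℕ)), lam ℓ)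
      ≤ ∫ f in (-W)..W, residP (Q * Qᴴ) f :=
  stmt5_general N K W hK1 hKN lam S hOrth hEig hAnti Q hQ

end
end

section
/- For any M×N complex matrices A and B with M ≤ N, having singular values α₀ ≥ α₁ ≥ ⋯ ≥ α_{M−1} ≥ 0 and β₀ ≥ β₁ ≥ ⋯ ≥ β_{M−1} ≥ 0 respectively, |trace(A B*)| ≤ Σ_{m=0}^{M−1} α_m β_m. -/
/-!
Write `A = U Σ_α V*` and `B = U' Σ_β V'*`. Then `trace (A B*) = ∑ᵢⱼ αᵢ βⱼ Pᵢⱼ Qⱼᵢ`, where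
`P = V* V'` (restricted to its leading `M × M` block) and `Q = U'* U` come from unitary matrices.
By AM-GM on the unit row and column norms of unitaries, `cᵢⱼ = |Pᵢⱼ| |Qⱼᵢ|` is doubly
substochastic, so it remains to show `∑ᵢⱼ αᵢ βⱼ cᵢⱼ ≤ ∑ᵢ αᵢ βᵢ` for decreasing nonnegative
`α`, `β`. Summing by parts in `j` reduces this to `∑ᵢ αᵢ wᵢ ≤ ∑_{i<k} αᵢ` for weights
`0 ≤ wᵢ ≤ 1` of total mass at most `k`, which is summation by parts again.
-/

open Matrix

noncomputable section

/-- `IsSVD A σ` : `σ` lists the singular values of `A` in decreasing order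
(via a full singular value decomposition; `A` is `M×N` with `M ≤ N`). -/
def IsSVD {M N : ℕ} (A : Matrix (Fin M) (Fin N) ℂ) (σ : Fin M → ℝ) : Prop :=
  (∀ i, 0 ≤ σ i) ∧ (∀ i j : Fin M, i ≤ j → σ j ≤ σ i) ∧
  ∃ U : Matrix (Fin M) (Fin M) ℂ, ∃ V : Matrix (Fin N) (Fin N) ℂ,
    Uᴴ * U = 1 ∧ Vᴴ * V = 1 ∧
    A = U * (Matrix.of fun (i : Fin M) (j : Fin N) =>
      if (i : ℕ) = (j : ℕ) then ((σ i : ℝ) : ℂ) else 0) * Vᴴ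

open Finset

theorem sum_range_mul_le_of_sum_range_le {β x y : ℕ → ℝ} (hβ : Antitone β) (hβ0 : 0 ≤ β)
    {n : ℕ} (h : ∀ k ≤ n, ∑ i ∈ range k, x i ≤ ∑ i ∈ range k, y i) :
    ∑ i ∈ range n, β i * x i ≤ ∑ i ∈ range n, β i * y i := by
  have hD : ∀ k ≤ n, 0 ≤ ∑ i ∈ range k, (y i - x i) := fun k hk => by
    rw [sum_sub_distrib]
    linarith [h k hk]
  -- summation by parts as an invariant: the partial sums of `y - x` are nonnegative, `β` decreases
  have key : ∀ k ≤ n, β k * ∑ i ∈ range k, (y i - x i) ≤ ∑ i ∈ range k, β i * (y i - x i) := by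
    intro k hk
    induction k with
    | zero => simp
    | succ k ih =>
      rw [sum_range_succ, sum_range_succ]
      calc β (k + 1) * (∑ i ∈ range k, (y i - x i) + (y k - x k))
          ≤ β k * (∑ i ∈ range k, (y i - x i) + (y k - x k)) := by
            rw [← sum_range_succ]
            exact mul_le_mul_of_nonneg_right (hβ k.le_succ) (hD _ hk)
        _ ≤ _ := by
            rw [mul_add]
            linarith [ih (by omega)]
  have h0 := (mul_nonneg (hβ0 n) (hD n le_rfl)).trans (key n le_rfl)
  simp only [mul_sub, sum_sub_distrib] at h0
  linarith

theorem sum_range_mul_le_sum_range_of_le_one {α w : ℕ → ℝ} (hα : Antitone α) (hα0 : 0 ≤ α)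
    {n k : ℕ} (hkn : k ≤ n) (hw0 : ∀ i < n, 0 ≤ w i) (hw1 : ∀ i < n, w i ≤ 1)
    (hw : ∑ i ∈ range n, w i ≤ k) :
    ∑ i ∈ range n, α i * w i ≤ ∑ i ∈ range k, α i := by
  have hfilter : ∀ m, {i ∈ range m | i < k} = range (min m k) := fun m => by
    ext
    simp only [mem_filter, mem_range]
    omega
  calc ∑ i ∈ range n, α i * w i ≤ ∑ i ∈ range n, α i * if i < k then 1 else 0 := by
        refine sum_range_mul_le_of_sum_range_le hα hα0 fun m hm => ?_
        rw [sum_boole, hfilter, card_range, Nat.cast_min, le_min_iff]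
        constructor
        · calc ∑ i ∈ range m, w i ≤ ∑ i ∈ range m, 1 :=
                sum_le_sum fun i hi => hw1 i (by simp at hi; omega)
            _ = m := by simp
        · exact (sum_le_sum_of_subset_of_nonneg (range_subset_range.2 hm)
            fun i hi _ => hw0 i (by simpa using hi)).trans hw
    _ = ∑ i ∈ range k, α i := by
        simp only [mul_boole]
        rw [← sum_filter, hfilter, min_eq_right hkn]

theorem sum_range_mul_mul_le_of_substochastic {α β : ℕ → ℝ} (hα : Antitone α) (hα0 : 0 ≤ α)
    (hβ : Antitone β) (hβ0 : 0 ≤ β) {n : ℕ} {c : ℕ → ℕ → ℝ}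
    (hc0 : ∀ i < n, ∀ j < n, 0 ≤ c i j) (hrow : ∀ i < n, ∑ j ∈ range n, c i j ≤ 1)
    (hcol : ∀ j < n, ∑ i ∈ range n, c i j ≤ 1) :
    ∑ i ∈ range n, ∑ j ∈ range n, α i * β j * c i j ≤ ∑ i ∈ range n, α i * β i := by
  have hswap : ∑ i ∈ range n, ∑ j ∈ range n, α i * β j * c i j
      = ∑ j ∈ range n, β j * ∑ i ∈ range n, α i * c i j := by
    rw [sum_comm]
    refine sum_congr rfl fun j _ => ?_
    rw [mul_sum]
    exact sum_congr rfl fun i _ => by ring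
  have hpartial : ∀ k ≤ n, ∑ j ∈ range k, ∑ i ∈ range n, α i * c i j ≤ ∑ j ∈ range k, α j := by
    intro k hk
    rw [sum_comm]
    simp_rw [← mul_sum]
    refine sum_range_mul_le_sum_range_of_le_one hα hα0 hk
      (fun i hi => sum_nonneg fun j hj => hc0 i hi j (by simp at hj; omega))
      (fun i hi => (sum_le_sum_of_subset_of_nonneg (range_subset_range.2 hk)
        fun j hj _ => hc0 i hi j (by simpa using hj)).trans (hrow i hi)) ?_
    rw [sum_comm]
    calc ∑ j ∈ range k, ∑ i ∈ range n, c i j ≤ ∑ j ∈ range k, (1 : ℝ) :=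
          sum_le_sum fun j hj => hcol j (by simp at hj; omega)
      _ = k := by simp
  calc _ = ∑ j ∈ range n, β j * ∑ i ∈ range n, α i * c i j := hswap
    _ ≤ ∑ j ∈ range n, β j * α j := sum_range_mul_le_of_sum_range_le hβ hβ0 hpartial
    _ = ∑ i ∈ range n, α i * β i := sum_congr rfl fun i _ => mul_comm _ _

theorem Fin.extend_val_apply_of_le {γ : Type*} [Zero γ] {n : ℕ} (v : Fin n → γ) {k : ℕ}
    (hk : n ≤ k) : Function.extend Fin.val v 0 k = 0 :=
  Function.extend_apply' _ _ _ fun ⟨i, hi⟩ => by omega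

section ExtendByZero

variable {γ : Type*} [Preorder γ] [Zero γ] {n : ℕ} {v : Fin n → γ}

theorem Fin.extend_val_nonneg (hv0 : 0 ≤ v) : 0 ≤ Function.extend Fin.val v 0 := by
  intro k
  rcases lt_or_ge k n with hk | hk
  · lift k to Fin n using hk
    rw [Fin.val_injective.extend_apply]
    exact hv0 k
  · rw [Fin.extend_val_apply_of_le v hk]
    rfl

theorem Fin.antitone_extend_val (hv : Antitone v) (hv0 : 0 ≤ v) :
    Antitone (Function.extend Fin.val v 0) := by
  intro a b hab
  rcases lt_or_ge b n with hb | hb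
  · lift b to Fin n using hb
    lift a to Fin n using hab.trans_lt b.is_lt
    rw [Fin.val_injective.extend_apply, Fin.val_injective.extend_apply]
    exact hv hab
  · rw [Fin.extend_val_apply_of_le v hb]
    exact Fin.extend_val_nonneg hv0 a

end ExtendByZero

theorem sum_mul_mul_le_of_substochastic {n : ℕ} {α β : Fin n → ℝ} (hα : Antitone α)
    (hα0 : 0 ≤ α) (hβ : Antitone β) (hβ0 : 0 ≤ β) {c : Matrix (Fin n) (Fin n) ℝ}
    (hc0 : ∀ i j, 0 ≤ c i j) (hrow : ∀ i, ∑ j, c i j ≤ 1) (hcol : ∀ j, ∑ i, c i j ≤ 1) :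
    ∑ i, ∑ j, α i * β j * c i j ≤ ∑ i, α i * β i := by
  set c' : ℕ → ℕ → ℝ := Function.extend Fin.val (fun i => Function.extend Fin.val (c i) 0) 0
  have hc' : ∀ i j : Fin n, c' i j = c i j := by
    simp [c', Fin.val_injective.extend_apply]
  have key := sum_range_mul_mul_le_of_substochastic (Fin.antitone_extend_val hα hα0)
    (Fin.extend_val_nonneg hα0) (Fin.antitone_extend_val hβ hβ0) (Fin.extend_val_nonneg hβ0)
    (n := n) (c := c') ?_ ?_ ?_
  · simpa [← Fin.sum_univ_eq_sum_range, Fin.val_injective.extend_apply, hc'] using key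
  · intro i hi j hj
    lift i to Fin n using hi
    lift j to Fin n using hj
    rw [hc']
    exact hc0 i j
  · intro i hi
    lift i to Fin n using hi
    simpa [← Fin.sum_univ_eq_sum_range, hc'] using hrow i
  · intro j hj
    lift j to Fin n using hj
    simpa [← Fin.sum_univ_eq_sum_range, hc'] using hcol j

namespace Matrix

section Unitary

variable {𝕜 m n : Type*} [RCLike 𝕜] [Fintype m] [DecidableEq m] [Fintype n] [DecidableEq n]

theorem sum_norm_sq_row_of_mem_unitaryGroup {U : Matrix n n 𝕜} (hU : U ∈ unitaryGroup n 𝕜)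
    (i : n) : ∑ j, ‖U i j‖ ^ 2 = 1 := by
  have h := congrFun (congrFun (mem_unitaryGroup_iff.1 hU) i) i
  simp only [mul_apply, star_apply, RCLike.star_def, RCLike.mul_conj, one_apply_eq] at h
  exact_mod_cast h

theorem sum_norm_sq_col_of_mem_unitaryGroup {U : Matrix n n 𝕜} (hU : U ∈ unitaryGroup n 𝕜)
    (j : n) : ∑ i, ‖U i j‖ ^ 2 = 1 := by
  simpa [star_apply] using sum_norm_sq_row_of_mem_unitaryGroup (Unitary.star_mem hU) j

theorem sum_norm_mul_norm_le_one_of_mem_unitaryGroup {P : Matrix n n 𝕜} {Q : Matrix m m 𝕜}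
    (hP : P ∈ unitaryGroup n 𝕜) (hQ : Q ∈ unitaryGroup m 𝕜) {e : m → n}
    (he : Function.Injective e) (i : m) : ∑ j, ‖P (e i) (e j)‖ * ‖Q j i‖ ≤ 1 := by
  have hProw : ∑ j, ‖P (e i) (e j)‖ ^ 2 ≤ 1 :=
    calc ∑ j, ‖P (e i) (e j)‖ ^ 2 = ∑ q ∈ univ.map ⟨e, he⟩, ‖P (e i) q‖ ^ 2 := by
          rw [sum_map]
          rfl
      _ ≤ ∑ q, ‖P (e i) q‖ ^ 2 := sum_le_univ_sum_of_nonneg fun _ => sq_nonneg _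
      _ = 1 := sum_norm_sq_row_of_mem_unitaryGroup hP (e i)
  calc ∑ j, ‖P (e i) (e j)‖ * ‖Q j i‖
      ≤ ∑ j, (‖P (e i) (e j)‖ ^ 2 + ‖Q j i‖ ^ 2) / 2 :=
        sum_le_sum fun j _ => by nlinarith [two_mul_le_add_sq ‖P (e i) (e j)‖ ‖Q j i‖]
    _ = ((∑ j, ‖P (e i) (e j)‖ ^ 2) + ∑ j, ‖Q j i‖ ^ 2) / 2 := by
        rw [← sum_add_distrib, sum_div]
    _ ≤ 1 := by
        rw [sum_norm_sq_col_of_mem_unitaryGroup hQ i]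
        linarith

end Unitary

-- `N` is not determined by `d`: without the type ascriptions below, `*` elaborates with the
-- `CStarMatrix` instance.
def rectDiagonal {R : Type*} [Zero R] {M N : ℕ} (d : Fin M → R) : Matrix (Fin M) (Fin N) R :=
  of fun i j => if (i : ℕ) = j then d i else 0

section RectDiagonal

variable {R : Type*} {M N : ℕ}

theorem rectDiagonal_mul_apply [NonUnitalNonAssocSemiring R] {l : Type*} (hMN : M ≤ N)
    (d : Fin M → R) (X : Matrix (Fin N) l R) (i : Fin M) (j : l) :
    ((rectDiagonal d : Matrix (Fin M) (Fin N) R) * X) i j = d i * X (Fin.castLE hMN i) j := by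
  rw [mul_apply, sum_eq_single (Fin.castLE hMN i)]
  · simp [rectDiagonal]
  · intro k _ hk
    have : (i : ℕ) ≠ k := fun h => hk (Fin.ext h.symm)
    simp [rectDiagonal, this]
  · simp

theorem mul_rectDiagonal_conjTranspose_apply [NonUnitalNonAssocSemiring R] [StarRing R]
    {l : Type*} (hMN : M ≤ N) (d : Fin M → R) (X : Matrix l (Fin N) R) (i : l) (j : Fin M) :
    (X * (rectDiagonal d : Matrix (Fin M) (Fin N) R)ᴴ) i j
      = X i (Fin.castLE hMN j) * star (d j) := by
  conv_lhs => rw [← conjTranspose_conjTranspose X, ← conjTranspose_mul]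
  rw [conjTranspose_apply, rectDiagonal_mul_apply hMN, star_mul, conjTranspose_apply, star_star]

theorem trace_rectDiagonal_mul [CommSemiring R] [StarRing R] (hMN : M ≤ N) (a b : Fin M → R)
    (P : Matrix (Fin N) (Fin N) R) (Q : Matrix (Fin M) (Fin M) R) :
    trace ((rectDiagonal a : Matrix (Fin M) (Fin N) R) *
        (P * (rectDiagonal b : Matrix (Fin M) (Fin N) R)ᴴ * Q))
      = ∑ i, ∑ j, a i * star (b j) * (P (Fin.castLE hMN i) (Fin.castLE hMN j) * Q j i) := by
  refine sum_congr rfl fun i _ => ?_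
  rw [diag_apply, rectDiagonal_mul_apply hMN, mul_apply, mul_sum]
  refine sum_congr rfl fun j _ => ?_
  rw [mul_rectDiagonal_conjTranspose_apply hMN]
  ring

theorem trace_mul_conjTranspose_eq_sum [CommSemiring R] [StarRing R] (hMN : M ≤ N)
    {A B : Matrix (Fin M) (Fin N) R} {a b : Fin M → R} {U U' : Matrix (Fin M) (Fin M) R}
    {V V' : Matrix (Fin N) (Fin N) R}
    (hA : A = U * (rectDiagonal a : Matrix (Fin M) (Fin N) R) * Vᴴ)
    (hB : B = U' * (rectDiagonal b : Matrix (Fin M) (Fin N) R) * V'ᴴ) :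
    trace (A * Bᴴ) = ∑ i, ∑ j, a i * star (b j) *
      ((Vᴴ * V') (Fin.castLE hMN i) (Fin.castLE hMN j) * (U'ᴴ * U) j i) := by
  set Da : Matrix (Fin M) (Fin N) R := rectDiagonal a
  set Db : Matrix (Fin M) (Fin N) R := rectDiagonal b
  rw [show A * Bᴴ = U * (Da * (Vᴴ * V' * Dbᴴ * U'ᴴ)) by
    subst hA hB
    simp only [conjTranspose_mul, conjTranspose_conjTranspose, Matrix.mul_assoc],
    trace_mul_comm, Matrix.mul_assoc, Matrix.mul_assoc (Vᴴ * V' * _)]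
  exact trace_rectDiagonal_mul hMN a b _ _

end RectDiagonal

end Matrix

/-- Von Neumann's trace inequality variant:
`|trace(A B*)| ≤ Σ_m α_m β_m`. -/
theorem stmt7 (M N : ℕ) (hMN : M ≤ N)
    (A B : Matrix (Fin M) (Fin N) ℂ) (α β : Fin M → ℝ)
    (hA : IsSVD A α) (hB : IsSVD B β) :
    ‖Matrix.trace (A * Bᴴ)‖ ≤ ∑ m, α m * β m := by
  obtain ⟨hα0, hα, U, V, hU, hV, hAeq⟩ := hA
  obtain ⟨hβ0, hβ, U', V', hU', hV', hBeq⟩ := hB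
  have hP : Vᴴ * V' ∈ unitaryGroup (Fin N) ℂ :=
    mul_mem (Unitary.star_mem (mem_unitaryGroup_iff'.2 hV)) (mem_unitaryGroup_iff'.2 hV')
  have hQ : U'ᴴ * U ∈ unitaryGroup (Fin M) ℂ :=
    mul_mem (Unitary.star_mem (mem_unitaryGroup_iff'.2 hU')) (mem_unitaryGroup_iff'.2 hU)
  have he := Fin.castLE_injective hMN
  rw [trace_mul_conjTranspose_eq_sum hMN hAeq hBeq]
  set P := Vᴴ * V'
  set Q := U'ᴴ * U
  set e := Fin.castLE hMN
  have hcol : ∀ j, ∑ i, ‖P (e i) (e j)‖ * ‖Q j i‖ ≤ 1 := fun j => by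
    simpa [star_apply] using sum_norm_mul_norm_le_one_of_mem_unitaryGroup
      (Unitary.star_mem hP) (Unitary.star_mem hQ) he j
  calc _ ≤ ∑ i, ∑ j, α i * β j * (‖P (e i) (e j)‖ * ‖Q j i‖) := by
        refine (norm_sum_le _ _).trans (sum_le_sum fun i _ =>
          (norm_sum_le _ _).trans_eq (sum_congr rfl fun j _ => ?_))
        simp [abs_of_nonneg (hα0 i), abs_of_nonneg (hβ0 j)]
    _ ≤ ∑ m, α m * β m :=
        sum_mul_mul_le_of_substochastic (fun i j h => hα i j h) hα0 (fun i j h => hβ i j h) hβ0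
          (c := of fun i j => ‖P (e i) (e j)‖ * ‖Q j i‖)
          (fun i j => mul_nonneg (norm_nonneg _) (norm_nonneg _))
          (sum_norm_mul_norm_le_one_of_mem_unitaryGroup hP hQ he) hcol

end
end

section
/- Let N ∈ ℕ, W ∈ (0, 1/2), and let V ∈ ℂ^{(N−2⌊NW⌋−1)×R} have orthonormal columns, R ≤ N−2⌊NW⌋−1. Let ε ∈ (0, 1/2) and K ∈ {1,…,N} satisfy λ^{(K−1)} ≥ ε, and set η = ‖F̄_{N,W}*B_{N,W} − V V* F̄_{N,W}* B_{N,W}‖ / ε (spectral norm). Then Q = [F_{N,W} F̄_{N,W} V] satisfies: (a) ‖S_K S_K* − QQ* S_K S_K*‖² ≤ η; (b) ‖s^{(ℓ)} − QQ* s^{(ℓ)}‖₂² ≤ η for all ℓ = 0,…,K−1; and (c) every unit vector s in the column space of S_K satisfies ‖QQ*s‖₂² ≥ 1 − Nη. -/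
/-!
Write `P = QQᴴ`. Completeness of the DFT basis, `F Fᴴ + F̄ F̄ᴴ = 1`, gives
`(1 - P) B = F̄ (F̄ᴴ B - V Vᴴ F̄ᴴ B)`, so `‖(1 - P) B‖ ≤ ε η`. Since `B S_K = S_K Λ` with all
diagonal entries of `Λ` at least `ε`, `(1 - P) S_K = (1 - P) B S_K Λ⁻¹` has norm at most `η`; it
also has norm at most `1`, so `‖(1 - P) S_K‖² ≤ η`. Parts (a) and (b) follow at once, and (c)
from Pythagoras for the orthogonal projection `P`.
-/

open Matrix
open scoped Real

noncomputable section

def prolateC (N : ℕ) (W : ℝ) : Matrix (Fin N) (Fin N) ℂ :=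
  (prolateR N W).map (fun x => (x : ℂ))

/-- partial DFT matrix with columns `(1/√N) e_{k/N}`, `|k| ≤ m`. -/
def Fmat (N m : ℕ) : Matrix (Fin N) (Fin (2 * m + 1)) ℂ :=
  Matrix.of fun n i =>
    ((1 / Real.sqrt N : ℝ) : ℂ) *
      Complex.exp (2 * (Real.pi : ℂ) * Complex.I * ((((i : ℕ) : ℤ) - (m : ℤ) : ℤ) : ℂ) *
        ((n : ℕ) : ℂ) / (N : ℂ))

/-- remaining (high-frequency) DFT columns, frequencies `k/N` with `k = m+1, …, N−m−1`. -/
def Fbar (N m : ℕ) : Matrix (Fin N) (Fin (N - (2 * m + 1))) ℂ :=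
  Matrix.of fun n j =>
    ((1 / Real.sqrt N : ℝ) : ℂ) *
      Complex.exp (2 * (Real.pi : ℂ) * Complex.I * (((j : ℕ) + m + 1 : ℕ) : ℂ) *
        ((n : ℕ) : ℂ) / (N : ℂ))

/-- spectral (ℓ₂ operator) norm of a matrix. -/
def specNorm {M P : ℕ} (A : Matrix (Fin M) (Fin P) ℂ) : ℝ :=
  ‖LinearMap.toContinuousLinearMap (Matrix.toEuclideanLin A)‖

open Complex
open scoped Matrix.Norms.L2Operator

lemma specNorm_eq_l2_opNorm {M P : ℕ} (A : Matrix (Fin M) (Fin P) ℂ) : specNorm A = ‖A‖ := rfl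

namespace Matrix

section Algebra

variable {R : Type*} [CommRing R] {m n n₁ n₂ k r : Type*}

lemma one_sub_mulVec [Fintype n] [DecidableEq n] (P : Matrix n n R) (x : n → R) :
    (1 - P) *ᵥ x = x - P *ᵥ x := by
  rw [sub_mulVec, one_mulVec]

variable [StarRing R]

lemma isStarProjection_mul_conjTranspose [Fintype m] [Fintype n] [DecidableEq n]
    {A : Matrix m n R} (hA : Aᴴ * A = 1) : IsStarProjection (A * Aᴴ) where
  isIdempotentElem := by
    rw [IsIdempotentElem, Matrix.mul_assoc, ← Matrix.mul_assoc Aᴴ, hA, Matrix.one_mul]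
  isSelfAdjoint := by
    rw [IsSelfAdjoint, star_eq_conjTranspose, conjTranspose_mul, conjTranspose_conjTranspose]

lemma _root_.IsStarProjection.conjTranspose_mul_self [Fintype n] {P : Matrix n n R}
    (hP : IsStarProjection P) : Pᴴ * P = P := by
  rw [← star_eq_conjTranspose, hP.isSelfAdjoint.star_eq, hP.isIdempotentElem.eq]

lemma conjTranspose_mul_self_submatrix_eq_one [Fintype m] [DecidableEq n] [DecidableEq k]
    {A : Matrix m n R} (hA : Aᴴ * A = 1) {f : k → n} (hf : Function.Injective f) :
    (A.submatrix id f)ᴴ * A.submatrix id f = 1 := by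
  rw [conjTranspose_submatrix, ← submatrix_mul _ _ _ _ _ Function.bijective_id, hA,
    submatrix_one _ hf]

variable [Fintype n₂] {F : Matrix m n₁ R} {G : Matrix m n₂ R}

lemma conjTranspose_mul_self_fromCols_mul_eq_one [Fintype m] [DecidableEq n₁] [DecidableEq n₂]
    [DecidableEq r] {V : Matrix n₂ r R}
    (hFG : (fromCols F G)ᴴ * fromCols F G = 1) (hV : Vᴴ * V = 1) :
    (fromCols F (G * V))ᴴ * fromCols F (G * V) = 1 := by
  rw [conjTranspose_fromCols_eq_fromRows_conjTranspose, fromRows_mul_fromCols, ← fromBlocks_one,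
    fromBlocks_inj] at hFG
  obtain ⟨hFF, hFG, hGF, hGG⟩ := hFG
  rw [conjTranspose_fromCols_eq_fromRows_conjTranspose, fromRows_mul_fromCols, ← fromBlocks_one,
    conjTranspose_mul, ← Matrix.mul_assoc, hFG, Matrix.mul_assoc, hGF, Matrix.mul_assoc,
    ← Matrix.mul_assoc Gᴴ, hGG, Matrix.one_mul, hFF, hV, Matrix.zero_mul, Matrix.mul_zero]

lemma mul_conjTranspose_add_mul_conjTranspose_eq_one [Fintype m] [Fintype n₁] [DecidableEq m]
    [DecidableEq n₁] [DecidableEq n₂] (e : m ≃ n₁ ⊕ n₂)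
    (hFG : (fromCols F G)ᴴ * fromCols F G = 1) : F * Fᴴ + G * Gᴴ = 1 := by
  rwa [← mul_eq_one_comm_of_equiv e, conjTranspose_fromCols_eq_fromRows_conjTranspose,
    fromCols_mul_fromRows] at hFG

lemma one_sub_fromCols_mul_conjTranspose [Fintype n₁] [Fintype r] [DecidableEq m]
    (V : Matrix n₂ r R) (hFG : F * Fᴴ + G * Gᴴ = 1) :
    1 - fromCols F (G * V) * (fromCols F (G * V))ᴴ = G * (Gᴴ - V * Vᴴ * Gᴴ) := by
  rw [conjTranspose_fromCols_eq_fromRows_conjTranspose, fromCols_mul_fromRows, ← hFG,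
    conjTranspose_mul]
  simp only [Matrix.mul_sub, Matrix.mul_assoc]
  abel

end Algebra

section RealToComplex

variable {m n k : Type*}

lemma map_ofReal_conjTranspose_mul_self [Fintype m] [DecidableEq n] {S : Matrix m n ℝ}
    (h : Sᵀ * S = 1) : (S.map (fun x => (x : ℂ)))ᴴ * S.map (fun x => (x : ℂ)) = 1 := by
  ext i j
  have hij := congrFun (congrFun h i) j
  simp only [mul_apply, transpose_apply, one_apply] at hij
  simp only [mul_apply, conjTranspose_apply, map_apply, RCLike.star_def, conj_ofReal, one_apply]
  split_ifs at hij ⊢ <;> exact_mod_cast hij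

lemma map_ofReal_mul_submatrix_eq_mul_diagonal [Fintype n] [Fintype k] [DecidableEq k]
    {B : Matrix n n ℝ} {S : Matrix n k ℝ} {d : k → ℝ} (h : B * S = S * diagonal d) {l : Type*}
    [Fintype l] [DecidableEq l] (f : l → k) :
    B.map (fun x => (x : ℂ)) * (S.map (fun x => (x : ℂ))).submatrix id f =
      (S.map (fun x => (x : ℂ))).submatrix id f * diagonal (fun i => (d (f i) : ℂ)) := by
  ext a i
  have hai := congrFun (congrFun h a) (f i)
  rw [mul_diagonal, mul_apply] at hai ⊢
  simp only [map_apply, submatrix_apply, id]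
  exact_mod_cast hai

end RealToComplex

section L2OperatorNorm

variable {𝕜 : Type*} [RCLike 𝕜] {l m n k : Type*} [Fintype l] [Fintype m] [Fintype n] [Fintype k]

lemma sum_norm_sq_eq_re_dotProduct (x : n → 𝕜) :
    ∑ i, ‖x i‖ ^ 2 = RCLike.re (star x ⬝ᵥ x) := by
  simp only [dotProduct, Pi.star_apply, RCLike.star_def, RCLike.conj_mul, map_sum]
  norm_cast

lemma sum_norm_sq_mulVec_eq (A : Matrix m n 𝕜) (x : n → 𝕜) :
    ∑ i, ‖(A *ᵥ x) i‖ ^ 2 = RCLike.re (star x ⬝ᵥ (Aᴴ * A) *ᵥ x) := by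
  rw [sum_norm_sq_eq_re_dotProduct, star_mulVec, dotProduct_mulVec, vecMul_vecMul,
    ← dotProduct_mulVec]

lemma sum_norm_sq_mulVec_of_conjTranspose_mul_self_eq_one [DecidableEq n] {A : Matrix m n 𝕜}
    (hA : Aᴴ * A = 1) (x : n → 𝕜) : ∑ i, ‖(A *ᵥ x) i‖ ^ 2 = ∑ i, ‖x i‖ ^ 2 := by
  rw [sum_norm_sq_mulVec_eq, hA, one_mulVec, sum_norm_sq_eq_re_dotProduct]

lemma sum_norm_sq_mulVec_single_eq_one [DecidableEq n] {A : Matrix m n 𝕜} (hA : Aᴴ * A = 1)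
    (j : n) : ∑ i, ‖(A *ᵥ Pi.single j 1) i‖ ^ 2 = 1 := by
  rw [sum_norm_sq_mulVec_of_conjTranspose_mul_self_eq_one hA]
  simp [Pi.single_apply, apply_ite (fun x : 𝕜 => ‖x‖ ^ 2)]

lemma _root_.IsStarProjection.sum_norm_sq_mulVec_add [DecidableEq n] {P : Matrix n n 𝕜}
    (hP : IsStarProjection P) (x : n → 𝕜) :
    ∑ i, ‖(P *ᵥ x) i‖ ^ 2 + ∑ i, ‖((1 - P) *ᵥ x) i‖ ^ 2 = ∑ i, ‖x i‖ ^ 2 := by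
  rw [sum_norm_sq_mulVec_eq, sum_norm_sq_mulVec_eq, hP.conjTranspose_mul_self,
    hP.one_sub.conjTranspose_mul_self, ← map_add, ← dotProduct_add, ← add_mulVec,
    add_sub_cancel, one_mulVec, sum_norm_sq_eq_re_dotProduct]

lemma sum_norm_sq_mulVec_le [DecidableEq n] (A : Matrix m n 𝕜) (x : n → 𝕜) :
    ∑ i, ‖(A *ᵥ x) i‖ ^ 2 ≤ ‖A‖ ^ 2 * ∑ i, ‖x i‖ ^ 2 := by
  have h := A.l2_opNorm_mulVec (WithLp.toLp 2 x)
  rw [PiLp.continuousLinearEquiv_symm_apply] at h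
  have hAx := EuclideanSpace.norm_sq_eq (WithLp.toLp 2 (A *ᵥ x))
  have hx := EuclideanSpace.norm_sq_eq (WithLp.toLp 2 x)
  simp only at hAx hx
  rw [← hAx, ← hx, ← mul_pow]
  exact pow_le_pow_left₀ (norm_nonneg _) h 2

lemma l2_opNorm_le_one_of_conjTranspose_mul_self_eq_one [DecidableEq n] {A : Matrix m n 𝕜}
    (hA : Aᴴ * A = 1) : ‖A‖ ≤ 1 := by
  have h : ‖A‖ * ‖A‖ ≤ 1 := by
    rw [← l2_opNorm_conjTranspose_mul_self, hA]
    exact IsStarProjection.norm_le _ (.one _)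
  nlinarith [norm_nonneg A]

lemma l2_opNorm_mul_le_div_of_mul_eq_mul_diagonal [DecidableEq n] [DecidableEq k]
    (X : Matrix l n 𝕜) {B : Matrix n n 𝕜} {S : Matrix n k 𝕜} {d : k → 𝕜} {ε : ℝ}
    (hBS : B * S = S * diagonal d) (hS : ‖S‖ ≤ 1) (hε : 0 < ε) (hd : ∀ i, ε ≤ ‖d i‖) :
    ‖X * S‖ ≤ ‖X * B‖ / ε := by
  have hd0 : ∀ i, d i ≠ 0 := fun i => norm_pos_iff.mp (hε.trans_le (hd i))
  have hS' : S = B * S * diagonal d⁻¹ := by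
    rw [hBS, Matrix.mul_assoc, diagonal_mul_diagonal]
    simp [mul_inv_cancel₀ (hd0 _)]
  have hinv : ‖(diagonal d⁻¹ : Matrix k k 𝕜)‖ ≤ ε⁻¹ := by
    rw [l2_opNorm_diagonal, pi_norm_le_iff_of_nonneg (by positivity)]
    intro i
    rw [Pi.inv_apply, norm_inv]
    exact inv_anti₀ hε (hd i)
  calc ‖X * S‖ = ‖X * B * S * diagonal d⁻¹‖ := by
        conv_lhs => rw [hS']
        simp only [Matrix.mul_assoc]
    _ ≤ ‖X * B‖ * ‖S‖ * ‖(diagonal d⁻¹ : Matrix k k 𝕜)‖ := by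
        grw [l2_opNorm_mul, l2_opNorm_mul]
    _ ≤ ‖X * B‖ * 1 * ε⁻¹ := by gcongr
    _ = ‖X * B‖ / ε := by rw [mul_one, div_eq_mul_inv]

lemma l2_opNorm_one_sub_fromCols_mul_le {n₁ n₂ r p : Type*} [Fintype n₁] [Fintype n₂]
    [Fintype r] [Fintype p] [DecidableEq m] [DecidableEq n₂] [DecidableEq p]
    {F : Matrix m n₁ 𝕜} {G : Matrix m n₂ 𝕜} (V : Matrix n₂ r 𝕜) (B : Matrix m p 𝕜)
    (hFG : F * Fᴴ + G * Gᴴ = 1) (hG : Gᴴ * G = 1) :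
    ‖(1 - fromCols F (G * V) * (fromCols F (G * V))ᴴ) * B‖ ≤ ‖Gᴴ * B - V * Vᴴ * (Gᴴ * B)‖ := by
  rw [one_sub_fromCols_mul_conjTranspose V hFG, Matrix.mul_assoc, Matrix.sub_mul,
    Matrix.mul_assoc (V * Vᴴ)]
  exact (l2_opNorm_mul _ _).trans
    (mul_le_of_le_one_left (norm_nonneg _) (l2_opNorm_le_one_of_conjTranspose_mul_self_eq_one hG))

variable [DecidableEq n] [DecidableEq k] {P : Matrix n n 𝕜} {S : Matrix n k 𝕜}

lemma _root_.IsStarProjection.sq_l2_opNorm_one_sub_mul_le {B : Matrix n n 𝕜} {d : k → 𝕜}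
    {δ ε : ℝ} (hP : IsStarProjection P) (hPB : ‖(1 - P) * B‖ ≤ δ) (hS : Sᴴ * S = 1)
    (hBS : B * S = S * diagonal d) (hε : 0 < ε) (hd : ∀ i, ε ≤ ‖d i‖) :
    ‖(1 - P) * S‖ ^ 2 ≤ δ / ε := by
  have hS1 := l2_opNorm_le_one_of_conjTranspose_mul_self_eq_one hS
  have hle_one : ‖(1 - P) * S‖ ≤ 1 :=
    (l2_opNorm_mul _ _).trans (mul_le_one₀ (hP.one_sub.norm_le _) (norm_nonneg _) hS1)
  calc ‖(1 - P) * S‖ ^ 2 ≤ ‖(1 - P) * S‖ := pow_le_of_le_one (norm_nonneg _) hle_one two_ne_zero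
    _ ≤ ‖(1 - P) * B‖ / ε := l2_opNorm_mul_le_div_of_mul_eq_mul_diagonal _ hBS hS1 hε hd
    _ ≤ δ / ε := by gcongr

lemma l2_opNorm_sub_mul_mul_conjTranspose_le (P : Matrix n n 𝕜) (hS : Sᴴ * S = 1) :
    ‖S * Sᴴ - P * (S * Sᴴ)‖ ≤ ‖(1 - P) * S‖ := by
  have hSH : ‖Sᴴ‖ ≤ 1 := by
    rw [l2_opNorm_conjTranspose]
    exact l2_opNorm_le_one_of_conjTranspose_mul_self_eq_one hS
  rw [show S * Sᴴ - P * (S * Sᴴ) = (1 - P) * S * Sᴴ by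
    simp only [Matrix.sub_mul, Matrix.one_mul, Matrix.mul_assoc]]
  exact (l2_opNorm_mul _ _).trans (mul_le_of_le_one_right (norm_nonneg _) hSH)

lemma sum_norm_sq_one_sub_mulVec_le (P : Matrix n n 𝕜) (hS : Sᴴ * S = 1) {c : k → 𝕜}
    (hc : ∑ i, ‖(S *ᵥ c) i‖ ^ 2 = 1) :
    ∑ i, ‖((1 - P) *ᵥ (S *ᵥ c)) i‖ ^ 2 ≤ ‖(1 - P) * S‖ ^ 2 := by
  rw [sum_norm_sq_mulVec_of_conjTranspose_mul_self_eq_one hS] at hc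
  rw [mulVec_mulVec]
  simpa [hc] using sum_norm_sq_mulVec_le ((1 - P) * S) c

lemma _root_.IsStarProjection.one_sub_le_sum_norm_sq_mulVec (hP : IsStarProjection P)
    (hS : Sᴴ * S = 1) {c : k → 𝕜} (hc : ∑ i, ‖(S *ᵥ c) i‖ ^ 2 = 1) :
    1 - ‖(1 - P) * S‖ ^ 2 ≤ ∑ i, ‖(P *ᵥ (S *ᵥ c)) i‖ ^ 2 := by
  have hpyth := hP.sum_norm_sq_mulVec_add (S *ᵥ c)
  have := sum_norm_sq_one_sub_mulVec_le P hS hc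
  linarith

end L2OperatorNorm

end Matrix

lemma sum_exp_two_pi_I_mul_div {N : ℕ} (hN : N ≠ 0) (t : ℤ) :
    ∑ n : Fin N, exp (2 * π * I * t * (n : ℕ) / N) = if (N : ℤ) ∣ t then (N : ℂ) else 0 := by
  have hζ := isPrimitiveRoot_exp N hN
  have hterm : ∀ n : ℕ, exp (2 * π * I * t * n / N) = (exp (2 * π * I / N) ^ t) ^ n := by
    intro n
    rw [← exp_int_mul, ← exp_nat_mul]
    ring_nf
  simp only [hterm]
  rw [Fin.sum_univ_eq_sum_range (fun n => (exp (2 * π * I / N) ^ t) ^ n)]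
  split_ifs with h
  · simp [(hζ.zpow_eq_one_iff_dvd t).mpr h]
  · have hpow : (exp (2 * π * I / N) ^ t) ^ N = 1 := by
      rw [← zpow_natCast, ← _root_.zpow_mul, mul_comm t, _root_.zpow_mul, zpow_natCast,
        hζ.pow_eq_one, _root_.one_zpow]
    rw [geom_sum_eq (mt (hζ.zpow_eq_one_iff_dvd t).mp h), hpow, sub_self, zero_div]

def dftMatrix (N : ℕ) {ι : Type*} (k : ι → ℤ) : Matrix (Fin N) ι ℂ :=
  of fun n i => ((1 / Real.sqrt N : ℝ) : ℂ) * exp (2 * π * I * (k i : ℂ) * ((n : ℕ) : ℂ) / N)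

section DFT

variable {N : ℕ} {ι κ : Type*}

lemma star_dftMatrix_mul_dftMatrix (k : ι → ℤ) (n : Fin N) (i j : ι) :
    star (dftMatrix N k n i) * dftMatrix N k n j =
      (1 / N : ℂ) * exp (2 * π * I * ((k j - k i : ℤ) : ℂ) * (n : ℕ) / N) := by
  have hscale : ((1 / Real.sqrt N : ℝ) : ℂ) * ((1 / Real.sqrt N : ℝ) : ℂ) = 1 / N := by
    rw [← ofReal_mul, div_mul_div_comm, one_mul, Real.mul_self_sqrt (Nat.cast_nonneg _)]
    push_cast
    rfl
  simp only [dftMatrix, of_apply, star_mul', RCLike.star_def, conj_ofReal, ← Complex.exp_conj,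
    map_mul, map_div₀, conj_I, map_intCast, map_natCast, map_ofNat]
  rw [mul_mul_mul_comm, hscale, ← Complex.exp_add]
  push_cast
  ring_nf

lemma dftMatrix_conjTranspose_mul_self [Fintype ι] [DecidableEq ι] {k : ι → ℤ} (a : ℤ)
    (hk : Function.Injective k) (hka : ∀ i, a ≤ k i ∧ k i < a + N) :
    (dftMatrix N k)ᴴ * dftMatrix N k = 1 := by
  ext i j
  have hN : N ≠ 0 := by have := hka i; omega
  simp only [mul_apply, conjTranspose_apply, star_dftMatrix_mul_dftMatrix, ← Finset.mul_sum,
    sum_exp_two_pi_I_mul_div hN, one_apply]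
  -- frequencies in a window of length `N` are congruent modulo `N` only if they are equal
  have hdvd : (N : ℤ) ∣ k j - k i ↔ i = j := by
    refine ⟨fun h => hk ?_, fun h => by simp [h]⟩
    have := Int.eq_zero_of_abs_lt_dvd h
      (abs_sub_lt_iff.mpr (by have := hka i; have := hka j; omega))
    omega
  simp only [hdvd]
  split_ifs <;> simp [hN]

lemma fromCols_dftMatrix (k : ι → ℤ) (k' : κ → ℤ) :
    fromCols (dftMatrix N k) (dftMatrix N k') = dftMatrix N (Sum.elim k k') := by
  ext n (i | j) <;> rfl

end DFT

section LowHighFrequencies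

variable {N m : ℕ}

lemma Fmat_eq_dftMatrix : Fmat N m = dftMatrix N (fun i : Fin (2 * m + 1) => (i : ℤ) - m) := rfl

lemma Fbar_eq_dftMatrix :
    Fbar N m = dftMatrix N (fun j : Fin (N - (2 * m + 1)) => ((j + m + 1 : ℕ) : ℤ)) := by
  ext n j
  simp only [Fbar, dftMatrix, of_apply, Int.cast_natCast]

lemma Fbar_conjTranspose_mul_self : (Fbar N m)ᴴ * Fbar N m = 1 := by
  rw [Fbar_eq_dftMatrix]
  refine dftMatrix_conjTranspose_mul_self (m + 1) (fun j j' h => Fin.ext (by omega)) fun j => ?_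
  have := j.isLt
  omega

lemma fromCols_Fmat_Fbar_conjTranspose_mul_self (h : 2 * m + 1 ≤ N) :
    (fromCols (Fmat N m) (Fbar N m))ᴴ * fromCols (Fmat N m) (Fbar N m) = 1 := by
  rw [Fmat_eq_dftMatrix, Fbar_eq_dftMatrix, fromCols_dftMatrix]
  refine dftMatrix_conjTranspose_mul_self (-m) (Function.Injective.sumElim
    (fun i i' h => Fin.ext (by omega)) (fun j j' h => Fin.ext (by omega)) fun i j => ?_) ?_
  · have := i.isLt
    omega
  · rintro (i | j)
    · have := i.isLt
      simp only [Sum.elim_inl]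
      omega
    · have := j.isLt
      simp only [Sum.elim_inr]
      omega

lemma two_mul_floor_add_one_le {W : ℝ} (hN : 0 < N) (hW0 : 0 ≤ W) (hW : W < 1 / 2) :
    2 * ⌊(N : ℝ) * W⌋₊ + 1 ≤ N := by
  have hfloor := Nat.floor_le (mul_nonneg (Nat.cast_nonneg N) hW0)
  have hN' : (0 : ℝ) < N := Nat.cast_pos.mpr hN
  have : ((2 * ⌊(N : ℝ) * W⌋₊ : ℕ) : ℝ) < N := by push_cast; nlinarith
  exact_mod_cast this

end LowHighFrequencies

/-- with `η = ‖F̄*B − V V* F̄*B‖/ε` and `Q = [F  F̄ V]`: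
(a) `‖S_K S_K* − QQ* S_K S_K*‖² ≤ η`;
(b) `‖s^{(ℓ)} − QQ* s^{(ℓ)}‖₂² ≤ η` for `ℓ < K`;
(c) every unit vector `s` in the column space of `S_K` has `‖QQ*s‖₂² ≥ 1 − Nη`. -/
theorem stmt10 (N : ℕ) (W : ℝ) (hW : W ∈ Set.Ioo (0 : ℝ) (1 / 2))
    (m : ℕ) (hm : m = ⌊(N : ℝ) * W⌋₊)
    (lam : Fin N → ℝ) (S : Matrix (Fin N) (Fin N) ℝ)
    (hOrth : Sᵀ * S = 1)
    (hEig : prolateR N W * S = S * Matrix.diagonal lam)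
    (hAnti : StrictAnti lam)
    (R : ℕ)
    (V : Matrix (Fin (N - (2 * m + 1))) (Fin R) ℂ) (hV : Vᴴ * V = 1)
    (ε : ℝ) (hε : ε ∈ Set.Ioo (0 : ℝ) (1 / 2))
    (K : ℕ) (hK1 : 1 ≤ K) (hKN : K ≤ N)
    (hlamK : ε ≤ lam ⟨K - 1, by omega⟩) :
    (specNorm
        ((S.map (fun x => (x : ℂ))).submatrix id (Fin.castLE hKN) *
            ((S.map (fun x => (x : ℂ))).submatrix id (Fin.castLE hKN))ᴴ -
          Matrix.fromCols (Fmat N m) (Fbar N m * V) *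
            (Matrix.fromCols (Fmat N m) (Fbar N m * V))ᴴ *
            ((S.map (fun x => (x : ℂ))).submatrix id (Fin.castLE hKN) *
              ((S.map (fun x => (x : ℂ))).submatrix id (Fin.castLE hKN))ᴴ)) ^ 2
      ≤ specNorm ((Fbar N m)ᴴ * prolateC N W -
          V * Vᴴ * ((Fbar N m)ᴴ * prolateC N W)) / ε) ∧
    (∀ ℓ : Fin N, (ℓ : ℕ) < K →
      ∑ n, ‖((fun n' => ((S n' ℓ : ℝ) : ℂ)) -
          (Matrix.fromCols (Fmat N m) (Fbar N m * V) *
            (Matrix.fromCols (Fmat N m) (Fbar N m * V))ᴴ).mulVec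
              (fun n' => ((S n' ℓ : ℝ) : ℂ))) n‖ ^ 2
        ≤ specNorm ((Fbar N m)ᴴ * prolateC N W -
            V * Vᴴ * ((Fbar N m)ᴴ * prolateC N W)) / ε) ∧
    (∀ c : Fin K → ℂ,
      (∑ n, ‖((S.map (fun x => (x : ℂ))).submatrix id (Fin.castLE hKN)).mulVec c n‖ ^ 2 = 1) →
      1 - N * (specNorm ((Fbar N m)ᴴ * prolateC N W -
          V * Vᴴ * ((Fbar N m)ᴴ * prolateC N W)) / ε)
        ≤ ∑ n, ‖(Matrix.fromCols (Fmat N m) (Fbar N m * V) *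
            (Matrix.fromCols (Fmat N m) (Fbar N m * V))ᴴ).mulVec
              (((S.map (fun x => (x : ℂ))).submatrix id (Fin.castLE hKN)).mulVec c) n‖ ^ 2) := by
  simp only [specNorm_eq_l2_opNorm]
  obtain ⟨hW0, hW2⟩ := hW
  have hmN : 2 * m + 1 ≤ N := hm ▸ two_mul_floor_add_one_le (by omega) hW0.le hW2
  have hG := fromCols_Fmat_Fbar_conjTranspose_mul_self hmN
  have hFG := mul_conjTranspose_add_mul_conjTranspose_eq_one
    ((finCongr (by omega)).trans finSumFinEquiv.symm) hG
  set Q := fromCols (Fmat N m) (Fbar N m * V)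
  have hP : IsStarProjection (Q * Qᴴ) :=
    isStarProjection_mul_conjTranspose (conjTranspose_mul_self_fromCols_mul_eq_one hG hV)
  set SK := (S.map (fun x => (x : ℂ))).submatrix id (Fin.castLE hKN)
  have hSK : SKᴴ * SK = 1 := conjTranspose_mul_self_submatrix_eq_one
    (map_ofReal_conjTranspose_mul_self hOrth) (Fin.castLE_injective hKN)
  have hlam : ∀ i, ε ≤ ‖(lam (Fin.castLE hKN i) : ℂ)‖ := fun i => by
    rw [norm_real, Real.norm_eq_abs]
    refine hlamK.trans ((hAnti.antitone ?_).trans (le_abs_self _))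
    simp only [Fin.le_iff_val_le_val, Fin.val_castLE]
    omega
  have hη := hP.sq_l2_opNorm_one_sub_mul_le
    (l2_opNorm_one_sub_fromCols_mul_le V _ hFG Fbar_conjTranspose_mul_self) hSK
    (B := prolateC N W) (map_ofReal_mul_submatrix_eq_mul_diagonal hEig _) hε.1 hlam
  refine ⟨?_, fun ℓ hℓ => ?_, fun c hc => ?_⟩
  · exact (pow_le_pow_left₀ (norm_nonneg _)
      (l2_opNorm_sub_mul_mul_conjTranspose_le _ hSK) 2).trans hη
  · have hcol : (fun n => ((S n ℓ : ℝ) : ℂ)) = SK *ᵥ Pi.single ⟨ℓ, hℓ⟩ 1 := by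
      rw [mulVec_single_one]
      rfl
    rw [hcol, ← one_sub_mulVec]
    exact (sum_norm_sq_one_sub_mulVec_le _ hSK (sum_norm_sq_mulVec_single_eq_one hSK _)).trans hη
  · have hN : (1 : ℝ) ≤ N := by exact_mod_cast (show 1 ≤ N by omega)
    have hη0 := (sq_nonneg _).trans hη
    have := hP.one_sub_le_sum_norm_sq_mulVec hSK hc
    nlinarith [mul_le_mul_of_nonneg_right hN hη0]

end
end
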